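/- The element v₁ = g₀ · g₁^{-1} has infinitely many distinct factorizations over the family W if and only if there exists a subset U ⊆ {1,…,k} with ∑_{i∈U} s_i = x. -/

import Mathlib

/-- The free group on the `2k+4` generators `g₀, …, g_{2k+1}, a, b`:
`g j = FreeGroup.of (Sum.inl j)`, `a = FreeGroup.of (Sum.inr false)`,
`b = FreeGroup.of (Sum.inr true)`. -/
abbrev Fgrp (k : ℕ) := FreeGroup (Fin (2 * k + 2) ⊕ Bool)

/-- The generator `g_j`. -/
def gGen {k : ℕ} (j : Fin (2 * k + 2)) : Fgrp k := FreeGroup.of (Sum.inl j)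

/-- The generator `a`. -/
def aGen {k : ℕ} : Fgrp k := FreeGroup.of (Sum.inr false)

/-- The generator `b`. -/
def bGen {k : ℕ} : Fgrp k := FreeGroup.of (Sum.inr true)

/-- Index type for the family `W` of `4k+2` elements. -/
abbrev Widx (k : ℕ) := Fin k ⊕ Fin k ⊕ Fin k ⊕ Fin k ⊕ Bool

/-- The family `W`.  The index `i : Fin k` corresponds to the `1`-based index `i+1`,
and `s : Fin k → ℕ` lists `s₁, …, s_k`:
* `u_{i+1} = g_i · a^{s_{i+1}} · g_{i+1}⁻¹`,
* `v_{i+1} = g_i · g_{i+1}⁻¹`,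
* `u'_{i+1} = g_{k+i+1} · b^{s_{i+1}} · g_{k+i+2}⁻¹`,
* `v'_{i+1} = g_{k+i+1} · g_{k+i+2}⁻¹`,
* `c = g_k · a^{-x} · g_{k+1}⁻¹`,
* `d = g_{2k+1} · b^{-x} · g₀⁻¹`. -/
def Wfam {k : ℕ} (s : Fin k → ℕ) (x : ℕ) : Widx k → Fgrp k
  | Sum.inl i =>
      gGen ⟨(i : ℕ), by have := i.isLt; omega⟩ * aGen ^ (s i) *
        (gGen ⟨(i : ℕ) + 1, by have := i.isLt; omega⟩)⁻¹
  | Sum.inr (Sum.inl i) =>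
      gGen ⟨(i : ℕ), by have := i.isLt; omega⟩ *
        (gGen ⟨(i : ℕ) + 1, by have := i.isLt; omega⟩)⁻¹
  | Sum.inr (Sum.inr (Sum.inl i)) =>
      gGen ⟨k + (i : ℕ) + 1, by have := i.isLt; omega⟩ * bGen ^ (s i) *
        (gGen ⟨k + (i : ℕ) + 2, by have := i.isLt; omega⟩)⁻¹
  | Sum.inr (Sum.inr (Sum.inr (Sum.inl i))) =>
      gGen ⟨k + (i : ℕ) + 1, by have := i.isLt; omega⟩ *
        (gGen ⟨k + (i : ℕ) + 2, by have := i.isLt; omega⟩)⁻¹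
  | Sum.inr (Sum.inr (Sum.inr (Sum.inr false))) =>
      gGen ⟨k, by omega⟩ * (aGen ^ x)⁻¹ * (gGen ⟨k + 1, by omega⟩)⁻¹
  | Sum.inr (Sum.inr (Sum.inr (Sum.inr true))) =>
      gGen ⟨2 * k + 1, by omega⟩ * (bGen ^ x)⁻¹ * (gGen ⟨0, by omega⟩)⁻¹

/-!
Each element of `W` has the form `g_p · ℓ · g_q⁻¹` with `ℓ` a power of `a` or `b`: it is an edge
`p → p + 1` of the cycle `0 → 1 → ⋯ → 2k+1 → 0`, labelled by `ℓ`. A walk (a product of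
consecutive edges) telescopes to `g_p · ℓ · g_q⁻¹` with `ℓ` the product of its labels, and where
two consecutive factors do not meet, nothing cancels in the free group. If no subset of the `s_i`
sums to `x`, every passage through `c` or `d` leaves a nonzero block `a^(E-x)` or `b^(F-x)` in the
reduced word of `ℓ`, so `ℓ = 1` forces the walk to run straight from `p` to `q`; comparing reduced
words, a factorization of `g₀ g₁⁻¹` is then a single edge. Conversely, a subset with sum `x` gives
a closed walk of length `2k + 2` with trivial product, which can be repeated any number of times
in front of `v₁`.
-/

namespace FreeGroup

variable {α β : Type*} [DecidableEq α] [DecidableEq β]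

theorem toWord_of_zpow (a : α) (n : ℤ) :
    (of a ^ n).toWord = List.replicate n.natAbs (a, decide (0 < n)) := by
  rcases n with m | m
  · rw [Int.ofNat_eq_natCast, zpow_natCast, toWord_of_pow, Int.natAbs_natCast]
    rcases m with _ | m <;> simp
  · simp [zpow_negSucc, toWord_inv, toWord_of_pow, invRev]

theorem toWord_mul_eq_append {x y : FreeGroup α}
    (h : ∀ a ∈ x.toWord.getLast?, ∀ b ∈ y.toWord.head?, a.1 = b.1 → a.2 = b.2) :
    (x * y).toWord = x.toWord ++ y.toWord := by
  rw [toWord_mul]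
  exact IsReduced.reduce_eq (isReduced_toWord.append isReduced_toWord h)

theorem toWord_mul_zpow_of {w : FreeGroup α} {a : α}
    (hw : ∀ z ∈ w.toWord.getLast?, z.1 ≠ a) (n : ℤ) :
    (w * of a ^ n).toWord = w.toWord ++ List.replicate n.natAbs (a, decide (0 < n)) := by
  rw [toWord_mul_eq_append, toWord_of_zpow]
  intro z hz b hb hzb
  rw [toWord_of_zpow] at hb
  obtain rfl := List.eq_of_mem_replicate (List.mem_of_mem_head? hb)
  exact absurd hzb (hw z hz)

theorem toWord_map_of_injective {f : α → β} (hf : Function.Injective f) (x : FreeGroup α) :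
    (map f x).toWord = x.toWord.map fun z => (f z.1, z.2) := by
  conv_lhs => rw [← mk_toWord (x := x)]
  rw [map.mk, toWord_mk]
  refine IsReduced.reduce_eq ?_
  exact List.isChain_map_of_isChain _ (fun a b h hab => h (hf hab)) isReduced_toWord

theorem toWord_of_inl_mul_map_inr_mul_inv {p q : α} {c : FreeGroup β} (h : c ≠ 1 ∨ p ≠ q) :
    (of (Sum.inl p) * map Sum.inr c * (of (Sum.inl q))⁻¹).toWord =
      (Sum.inl p, true) :: c.toWord.map (fun z => (Sum.inr z.1, z.2)) ++ [(Sum.inl q, false)] := by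
  have hc : (of (Sum.inl p) * map Sum.inr c).toWord =
      (Sum.inl p, true) :: c.toWord.map (fun z => (Sum.inr z.1, z.2)) := by
    rw [toWord_mul_eq_append] <;> simp [toWord_map_of_injective Sum.inr_injective]
  rcases eq_or_ne c 1 with rfl | hc1
  · rw [_root_.map_one, mul_one, toWord_mul_eq_append] <;>
      simp [toWord_inv, invRev, h.resolve_left (not_not.2 rfl)]
  obtain ⟨z, hz⟩ :=
    Option.isSome_iff_exists.1 (List.getLast?_isSome.2 (mt toWord_eq_nil_iff.1 hc1))
  rw [toWord_mul_eq_append, hc]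
  · simp [toWord_inv, invRev]
  · simp [hc, toWord_inv, invRev, List.getLast?_cons, List.getLast?_map, hz]

end FreeGroup

theorem List.prod_ofFn_mul_pow_mul_inv {G : Type*} [Group G] {m : ℕ} (h : Fin (m + 1) → G)
    (a : G) (e : Fin m → ℕ) :
    (List.ofFn fun i => h i.castSucc * a ^ e i * (h i.succ)⁻¹).prod =
      h 0 * a ^ (∑ i, e i) * (h (Fin.last m))⁻¹ := by
  induction m with
  | zero => simp
  | succ m ih =>
    rw [List.ofFn_succ, List.prod_cons, Fin.sum_univ_succ, pow_add]
    simp only [← Fin.succ_castSucc]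
    rw [ih (fun i => h i.succ) (fun i => e i.succ), Fin.succ_last]
    simp only [Fin.castSucc_zero]
    group

open FreeGroup (of)

namespace Wfam

variable {k : ℕ}

def src : Widx k → Fin (2 * k + 2)
  | Sum.inl i | Sum.inr (Sum.inl i) => ⟨i, by omega⟩
  | Sum.inr (Sum.inr (Sum.inl i)) | Sum.inr (Sum.inr (Sum.inr (Sum.inl i))) =>
    ⟨k + i + 1, by omega⟩
  | Sum.inr (Sum.inr (Sum.inr (Sum.inr false))) => ⟨k, by omega⟩
  | Sum.inr (Sum.inr (Sum.inr (Sum.inr true))) => ⟨2 * k + 1, by omega⟩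

def tgt : Widx k → Fin (2 * k + 2)
  | Sum.inl i | Sum.inr (Sum.inl i) => ⟨i + 1, by omega⟩
  | Sum.inr (Sum.inr (Sum.inl i)) | Sum.inr (Sum.inr (Sum.inr (Sum.inl i))) =>
    ⟨k + i + 2, by omega⟩
  | Sum.inr (Sum.inr (Sum.inr (Sum.inr false))) => ⟨k + 1, by omega⟩
  | Sum.inr (Sum.inr (Sum.inr (Sum.inr true))) => ⟨0, by omega⟩

def label (s : Fin k → ℕ) (x : ℕ) : Widx k → FreeGroup Bool
  | Sum.inl i => of false ^ s i
  | Sum.inr (Sum.inr (Sum.inl i)) => of true ^ s i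
  | Sum.inr (Sum.inl _) | Sum.inr (Sum.inr (Sum.inr (Sum.inl _))) => 1
  | Sum.inr (Sum.inr (Sum.inr (Sum.inr b))) => (of b ^ x)⁻¹

theorem eq_src_mul_label_mul_tgt (s : Fin k → ℕ) (x : ℕ) (j : Widx k) :
    Wfam s x j = gGen (src j) * FreeGroup.map Sum.inr (label s x j) * (gGen (tgt j))⁻¹ := by
  rcases j with i | i | i | i | _ | _ <;> simp [Wfam, src, tgt, label, aGen, bGen]

/- Edges leaving `q` are labelled by powers of `of (letter q)` (`false` for `a`, `true` for `b`);
`stage q` is the number of edges from the first vertex (`0` or `k + 1`) of its half to `q`. -/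
def letter (q : Fin (2 * k + 2)) : Bool := decide (k < q)

def stage (q : Fin (2 * k + 2)) : ℕ := if k < q then q - (k + 1) else q

theorem label_cases (s : Fin k → ℕ) (x : ℕ) (j : Widx k) :
    (∃ i : Fin k, stage (src j) = i ∧ stage (tgt j) = i + 1 ∧ (tgt j : ℕ) = src j + 1 ∧
      letter (tgt j) = letter (src j) ∧
      ∃ e, (e = 0 ∨ e = s i) ∧ label s x j = of (letter (src j)) ^ e) ∨
    (stage (src j) = k ∧ stage (tgt j) = 0 ∧ letter (tgt j) = !letter (src j) ∧
      label s x j = (of (letter (src j)) ^ x)⁻¹) := by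
  rcases j with i | i | i | i | _ | _
  all_goals first
    | refine Or.inl ⟨i, ?_⟩
      have hi : ¬ k < (i : ℕ) ∧ ¬ k ≤ (i : ℕ) ∧ k < k + (i : ℕ) + 1 ∧ k < k + (i : ℕ) + 2 := by
        omega
      simp [stage, src, tgt, letter, label, hi] <;> omega
    | refine Or.inr ?_
      have hk : k ≤ 2 * k := by omega
      simp [stage, src, tgt, letter, label, hk] <;> omega

def SubsetSumBelow (s : Fin k → ℕ) (m E : ℕ) : Prop :=
  ∃ U : Finset (Fin k), (∀ i ∈ U, (i : ℕ) < m) ∧ ∑ i ∈ U, s i = E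

theorem subsetSumBelow_zero (s : Fin k → ℕ) (m : ℕ) : SubsetSumBelow s m 0 :=
  ⟨∅, by simp, by simp⟩

theorem SubsetSumBelow.add {s : Fin k → ℕ} {i : Fin k} {E e : ℕ}
    (h : SubsetSumBelow s i E) (he : e = 0 ∨ e = s i) : SubsetSumBelow s (i + 1) (E + e) := by
  obtain ⟨U, hU, rfl⟩ := h
  rcases he with rfl | rfl
  · exact ⟨U, fun j hj => (hU j hj).trans (Nat.lt_succ_self _), rfl⟩
  · have hi : i ∉ U := fun hi => (hU i hi).false
    refine ⟨insert i U, ?_, by rw [Finset.sum_insert hi, add_comm]⟩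
    intro j hj
    rcases Finset.mem_insert.1 hj with rfl | hj
    · exact Nat.lt_succ_self _
    · exact (hU j hj).trans (Nat.lt_succ_self _)

theorem SubsetSumBelow.ne {s : Fin k → ℕ} {x m E : ℕ}
    (hsum : ¬ ∃ U : Finset (Fin k), ∑ i ∈ U, s i = x) (h : SubsetSumBelow s m E) : E ≠ x := by
  obtain ⟨U, -, rfl⟩ := h
  exact fun h => hsum ⟨U, h⟩

/- The label product `c` of a walk of length `n` from `p` to `q`, read as a word `w` followed by the
current block `(letter q)^E`: `E` is a sum of distinct `s_i` offered in the current half, `w` does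
not end in `letter q`, and `w = 1` only while the walk has not yet passed `c` or `d`. -/
def WalkInv (s : Fin k → ℕ) (p q : Fin (2 * k + 2)) (c : FreeGroup Bool) (n : ℕ) : Prop :=
  ∃ w : FreeGroup Bool, ∃ E : ℕ, SubsetSumBelow s (stage q) E ∧ c = w * of (letter q) ^ (E : ℤ) ∧
    (∀ z ∈ w.toWord.getLast?, z.1 ≠ letter q) ∧ (w = 1 → (q : ℕ) = p + n)

theorem walkInv_nil (s : Fin k → ℕ) (p : Fin (2 * k + 2)) : WalkInv s p p 1 0 :=
  ⟨1, 0, subsetSumBelow_zero s _, by simp, by simp, fun _ => rfl⟩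

theorem WalkInv.mul_label {s : Fin k → ℕ} {x : ℕ}
    (hsum : ¬ ∃ U : Finset (Fin k), ∑ i ∈ U, s i = x) {p q : Fin (2 * k + 2)} {c : FreeGroup Bool}
    {n : ℕ} (h : WalkInv s p q c n) {j : Widx k} (hj : src j = q) :
    WalkInv s p (tgt j) (c * label s x j) (n + 1) := by
  obtain ⟨w, E, hE, rfl, hlast, hpath⟩ := h
  subst hj
  rcases label_cases s x j with ⟨i, hi, hi', htgt, hlet, e, he, hlabel⟩ | ⟨-, h0, hlet, hlabel⟩
  · refine ⟨w, E + e, hi' ▸ (hi ▸ hE).add he, ?_, hlet ▸ hlast, fun hw => ?_⟩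
    · rw [hlabel, hlet, mul_assoc, ← zpow_natCast, ← zpow_add]
      push_cast
      rfl
    · rw [htgt, hpath hw]
      rfl
  · have hEx : (E : ℤ) - x ≠ 0 := sub_ne_zero.2 (by exact_mod_cast hE.ne hsum)
    have hw' := FreeGroup.toWord_mul_zpow_of hlast ((E : ℤ) - x)
    refine ⟨w * of (letter (src j)) ^ ((E : ℤ) - x), 0, h0 ▸ subsetSumBelow_zero s 0, ?_, ?_, ?_⟩
    · rw [hlabel, zpow_sub, zpow_natCast]
      simp [mul_assoc]
    · simp [hw', hlet, List.getLast?_append, List.getLast?_replicate, Int.natAbs_eq_zero, hEx]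
    · intro h1
      rw [← FreeGroup.toWord_eq_nil_iff, hw'] at h1
      simp [Int.natAbs_eq_zero, hEx] at h1

theorem WalkInv.eq_add_of_eq_one {s : Fin k → ℕ} {p q : Fin (2 * k + 2)} {n : ℕ}
    (h : WalkInv s p q 1 n) : (q : ℕ) = p + n := by
  obtain ⟨w, E, -, h1, hlast, hpath⟩ := h
  refine hpath ?_
  have := congrArg FreeGroup.toWord h1
  rw [FreeGroup.toWord_mul_zpow_of hlast, FreeGroup.toWord_one, eq_comm,
    List.append_eq_nil_iff, FreeGroup.toWord_eq_nil_iff] at this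
  exact this.1

def IsWalk : Fin (2 * k + 2) → List (Widx k) → Fin (2 * k + 2) → Prop
  | p, [], q => p = q
  | p, j :: l, q => src j = p ∧ IsWalk (tgt j) l q

theorem isWalk_append {p q : Fin (2 * k + 2)} {l₁ l₂ : List (Widx k)} :
    IsWalk p (l₁ ++ l₂) q ↔ ∃ r, IsWalk p l₁ r ∧ IsWalk r l₂ q := by
  induction l₁ generalizing p with
  | nil => simp [IsWalk]
  | cons j l ih => simp [IsWalk, ih, and_assoc]

def content (s : Fin k → ℕ) (x : ℕ) (l : List (Widx k)) : FreeGroup Bool :=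
  (l.map (label s x)).prod

theorem prod_eq_of_isWalk (s : Fin k → ℕ) (x : ℕ) {p q : Fin (2 * k + 2)} {l : List (Widx k)}
    (h : IsWalk p l q) :
    (l.map (Wfam s x)).prod = gGen p * FreeGroup.map Sum.inr (content s x l) * (gGen q)⁻¹ := by
  induction l generalizing p with
  | nil => simp [content, show p = q from h]
  | cons j l ih =>
    obtain ⟨rfl, h⟩ := h
    simp only [List.map_cons, List.prod_cons, content, ih h, eq_src_mul_label_mul_tgt, map_mul]
    group

theorem exists_isWalk_prefix (j : Widx k) (l : List (Widx k)) :
    ∃ w rest q, j :: l = w ++ rest ∧ w ≠ [] ∧ IsWalk (src j) w q ∧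
      ∀ j' ∈ rest.head?, src j' ≠ q := by
  induction l generalizing j with
  | nil => exact ⟨[j], [], tgt j, rfl, by simp, ⟨rfl, rfl⟩, by simp⟩
  | cons j' l ih =>
    by_cases hj : tgt j = src j'
    · obtain ⟨w, rest, q, hl, -, hw, hrest⟩ := ih j'
      exact ⟨j :: w, rest, q, by rw [hl]; rfl, by simp, ⟨rfl, hj ▸ hw⟩, hrest⟩
    · exact ⟨[j], j' :: l, tgt j, rfl, by simp, ⟨rfl, rfl⟩, by simpa [eq_comm] using hj⟩

section NoSolution

variable {s : Fin k → ℕ} {x : ℕ} (hsum : ¬ ∃ U : Finset (Fin k), ∑ i ∈ U, s i = x)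
include hsum

theorem walkInv_of_isWalk {p q : Fin (2 * k + 2)} {l : List (Widx k)} (h : IsWalk p l q) :
    WalkInv s p q (content s x l) l.length := by
  induction l using List.reverseRecOn generalizing q with
  | nil => exact (show p = q from h) ▸ walkInv_nil s p
  | append_singleton l j ih =>
    obtain ⟨r, hl, hj, rfl⟩ : ∃ r, IsWalk p l r ∧ src j = r ∧ tgt j = q := by
      simpa [isWalk_append, IsWalk] using h
    simpa [content] using (ih hl).mul_label hsum hj

theorem val_eq_add_length_of_content_eq_one {p q : Fin (2 * k + 2)} {l : List (Widx k)}
    (h : IsWalk p l q) (hc : content s x l = 1) : (q : ℕ) = p + l.length :=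
  (hc ▸ walkInv_of_isWalk hsum h).eq_add_of_eq_one

theorem toWord_prod_of_isWalk {p q : Fin (2 * k + 2)} {l : List (Widx k)} (h : IsWalk p l q)
    (hl : l ≠ []) :
    ((l.map (Wfam s x)).prod).toWord = (Sum.inl p, true) ::
      (content s x l).toWord.map (fun z => (Sum.inr z.1, z.2)) ++ [(Sum.inl q, false)] := by
  rw [prod_eq_of_isWalk s x h]
  refine FreeGroup.toWord_of_inl_mul_map_inr_mul_inv (or_iff_not_imp_left.2 fun hc hpq => ?_)
  have := val_eq_add_length_of_content_eq_one hsum h (not_not.1 hc)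
  have := List.length_pos_iff.2 hl
  omega

theorem toWord_prod_append_of_isWalk {p q : Fin (2 * k + 2)} {l : List (Widx k)}
    (h : IsWalk p l q) (hl : l ≠ []) {y : Fgrp k} {p' : Fin (2 * k + 2)}
    (hy : y.toWord.head? = some (Sum.inl p', true)) (hp' : p' ≠ q) :
    ((l.map (Wfam s x)).prod * y).toWord = ((l.map (Wfam s x)).prod).toWord ++ y.toWord := by
  refine FreeGroup.toWord_mul_eq_append fun a ha b hb hab => ?_
  simp only [toWord_prod_of_isWalk hsum h hl, List.getLast?_append, List.getLast?_singleton,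
    Option.some_or, Option.mem_def, Option.some_inj, hy] at ha hb
  subst ha hb
  exact absurd (Sum.inl_injective hab).symm hp'

theorem head?_toWord_prod (j : Widx k) (l : List (Widx k)) :
    (((j :: l).map (Wfam s x)).prod).toWord.head? = some (Sum.inl (src j), true) := by
  induction hn : l.length using Nat.strong_induction_on generalizing j l with
  | _ n ih =>
    obtain ⟨w, rest, q, hjl, hw0, hw, hrest⟩ := exists_isWalk_prefix j l
    rw [hjl]
    rcases rest with _ | ⟨j', rest⟩
    · simp [toWord_prod_of_isWalk hsum hw hw0]
    · have hlen : rest.length < n := by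
        have := List.length_pos_iff.2 hw0
        have := congrArg List.length hjl
        simp at this
        omega
      rw [List.map_append, List.prod_append, toWord_prod_append_of_isWalk hsum hw hw0
        (ih _ hlen j' rest rfl) (hrest j' rfl), toWord_prod_of_isWalk hsum hw hw0]
      simp

theorem length_eq_one_of_prod_eq {l : List (Widx k)} (hl : l ≠ [])
    (h : (l.map (Wfam s x)).prod = gGen ⟨0, by omega⟩ * (gGen ⟨1, by omega⟩)⁻¹) :
    l.length = 1 := by
  obtain ⟨j, l, rfl⟩ := List.exists_cons_of_ne_nil hl
  obtain ⟨w, rest, q, hjl, hw0, hw, hrest⟩ := exists_isWalk_prefix j l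
  have htarget : (gGen ⟨0, by omega⟩ * (gGen ⟨1, by omega⟩)⁻¹ : Fgrp k).toWord =
      [(Sum.inl ⟨0, by omega⟩, true), (Sum.inl ⟨1, by omega⟩, false)] := by
    rw [FreeGroup.toWord_mul_eq_append] <;> simp [gGen, FreeGroup.toWord_inv, FreeGroup.invRev]
  replace h := congrArg FreeGroup.toWord h
  rw [htarget, hjl] at h
  rcases rest with _ | ⟨j', rest⟩
  · rw [List.append_nil] at hjl h
    rw [toWord_prod_of_isWalk hsum hw hw0] at h
    simp [List.append_eq_singleton_iff, FreeGroup.toWord_eq_nil_iff] at h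
    obtain ⟨h0, hc, rfl⟩ := h
    have := val_eq_add_length_of_content_eq_one hsum hw hc
    simp [h0] at this
    rw [hjl]
    omega
  · have hhead := head?_toWord_prod hsum j' rest
    rw [List.map_append, List.prod_append, toWord_prod_append_of_isWalk hsum hw hw0 hhead
      (hrest j' rfl), toWord_prod_of_isWalk hsum hw hw0] at h
    obtain ⟨ys, hys⟩ := List.head?_eq_some_iff.1 hhead
    have := congrArg List.length h
    rw [hys] at this
    simp at this
    omega

end NoSolution

def loop (U : Finset (Fin k)) : List (Widx k) :=
  List.ofFn (fun i => if i ∈ U then Sum.inl i else Sum.inr (Sum.inl i)) ++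
    Sum.inr (Sum.inr (Sum.inr (Sum.inr false))) ::
    List.ofFn (fun i => if i ∈ U then Sum.inr (Sum.inr (Sum.inl i))
      else Sum.inr (Sum.inr (Sum.inr (Sum.inl i)))) ++
    [Sum.inr (Sum.inr (Sum.inr (Sum.inr true)))]

theorem prod_loop {s : Fin k → ℕ} {x : ℕ} {U : Finset (Fin k)} (hU : ∑ i ∈ U, s i = x) :
    ((loop U).map (Wfam s x)).prod = 1 := by
  have hsum : ∑ i, (if i ∈ U then s i else 0) = x := by simpa [Finset.sum_ite_mem] using hU
  have ha : ((List.ofFn fun i => if i ∈ U then Sum.inl i else Sum.inr (Sum.inl i)).map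
      (Wfam s x)).prod = gGen ⟨0, by omega⟩ * aGen ^ x * (gGen ⟨k, by omega⟩)⁻¹ := by
    rw [List.map_ofFn]
    refine (Eq.trans ?_ (List.prod_ofFn_mul_pow_mul_inv
      (fun i : Fin (k + 1) => (gGen ⟨i, by omega⟩ : Fgrp k)) aGen
      (fun i => if i ∈ U then s i else 0))).trans ?_
    · congr 2
      funext i
      by_cases hi : i ∈ U <;> simp [Wfam, hi]
    · simp only [hsum, Fin.val_zero, Fin.val_last]
  have hb : ((List.ofFn fun i => if i ∈ U then Sum.inr (Sum.inr (Sum.inl i))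
      else Sum.inr (Sum.inr (Sum.inr (Sum.inl i)))).map (Wfam s x)).prod =
      gGen ⟨k + 1, by omega⟩ * bGen ^ x * (gGen ⟨2 * k + 1, by omega⟩)⁻¹ := by
    rw [List.map_ofFn]
    refine (Eq.trans ?_ (List.prod_ofFn_mul_pow_mul_inv
      (fun i : Fin (k + 1) => (gGen ⟨k + i + 1, by omega⟩ : Fgrp k)) bGen
      (fun i => if i ∈ U then s i else 0))).trans ?_
    · congr 2
      funext i
      by_cases hi : i ∈ U <;> simp [Wfam, hi] <;> rfl
    · simp only [hsum, Fin.val_zero, Fin.val_last, add_zero, two_mul]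
  simp only [loop, List.map_append, List.prod_append, List.map_cons, List.map_nil, List.prod_cons,
    List.prod_nil, ha, hb, Wfam]
  group

end Wfam

/-- The element `v₁ = g₀ · g₁⁻¹` has infinitely many distinct factorizations over the
family `W` iff the subset sum instance `(s₁,…,s_k; x)` has a solution. -/
theorem v1_infinitely_many_factorizations_iff_subset_sum (k : ℕ) (hk : 1 ≤ k)
    (s : Fin k → ℕ) (x : ℕ) :
    { l : List (Widx k) | l ≠ [] ∧
        (l.map (Wfam s x)).prod = gGen ⟨0, by omega⟩ * (gGen ⟨1, by omega⟩)⁻¹ }.Infinite ↔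
      (∃ U : Finset (Fin k), ∑ i ∈ U, s i = x) := by
  constructor
  · intro hinf
    by_contra hsum
    refine hinf ((Set.finite_range fun j : Widx k => [j]).subset ?_)
    rintro l ⟨hl, h⟩
    obtain ⟨j, rfl⟩ := List.length_eq_one_iff.1 (Wfam.length_eq_one_of_prod_eq hsum hl h)
    exact ⟨j, rfl⟩
  · rintro ⟨U, hU⟩
    have hlen : (Wfam.loop U).length = 2 * k + 2 := by simp [Wfam.loop]; ring
    refine Set.infinite_of_injective_forall_mem
      (f := fun n => (List.replicate n (Wfam.loop U)).flatten ++ [Sum.inr (Sum.inl ⟨0, hk⟩)])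
      (fun m n hmn => by simpa [hlen] using congrArg List.length hmn) fun n => ⟨by simp, ?_⟩
    simp [List.prod_flatten, Wfam.prod_loop hU, Wfam]
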